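/- Let ε0 ∈ (0,1], let γ : ℕ → [0,∞) be nonincreasing with γ(k) → 0, and let Ω ∈ U(ε0,γ) be a p×p matrix. Then for every integer k0 with 1 ≤ k0 < p, one has ‖Ω‖_(∞,∞) ≤ γ(k0) + (2k0+1) ε0^{-1}. (This is the quantitative bound proved for the second inclusion of Lemma 1, obtained from ‖Ω − B_{k0}(Ω)‖_(∞,∞) ≤ γ(k0) and ‖B_{k0}(Ω)‖_(∞,∞) ≤ (2k0+1)‖Ω‖_∞ ≤ (2k0+1)‖Ω‖_(2,2).) -/

import Mathlib

open MeasureTheory ProbabilityTheory Filter Matrix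
open scoped BigOperators ENNReal NNReal Classical

noncomputable section

/-- The `L∞`-operator norm of a real matrix: maximum absolute row sum. -/
def linftyNorm {p : ℕ} (A : Matrix (Fin p) (Fin p) ℝ) : ℝ :=
  ⨆ i, ∑ j, |A i j|

/-- The `L2`-operator norm of a real matrix (largest singular value). -/
def l2Norm {p : ℕ} (A : Matrix (Fin p) (Fin p) ℝ) : ℝ :=
  ‖Matrix.toEuclideanCLM (𝕜 := ℝ) A‖

/-- The entrywise sup norm. -/
def entryNorm {p : ℕ} (A : Matrix (Fin p) (Fin p) ℝ) : ℝ :=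
  ⨆ i, ⨆ j, |A i j|

/-- `‖·‖_(r,r)` where `r = 2` when the boolean is `true` and `r = ∞` otherwise. -/
def rNorm (r : Bool) {p : ℕ} (A : Matrix (Fin p) (Fin p) ℝ) : ℝ :=
  if r then l2Norm A else linftyNorm A

/-- Membership in the class `U(ε₀, γ)`: symmetric positive definite, banding tail bound
`max_j Σ_i {|ω_ij| : |i−j| > k} ≤ γ(k)` for every `k ≥ 1`, and all eigenvalues in
`[ε₀, ε₀⁻¹]`. -/
def memU (ε0 : ℝ) (γ : ℕ → ℝ) {p : ℕ} (Ω : Matrix (Fin p) (Fin p) ℝ) : Prop :=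
  Ω.PosDef ∧
  (∀ k : ℕ, 1 ≤ k → ∀ j : Fin p,
    (∑ i : Fin p, if (k : ℤ) < |(i : ℤ) - (j : ℤ)| then |Ω i j| else 0) ≤ γ k) ∧
  (∀ μ ∈ spectrum ℝ Ω, ε0 ≤ μ ∧ μ ≤ ε0⁻¹)

/-- Square root of a positive semidefinite matrix (junk value `0` otherwise). -/
def matSqrt {p : ℕ} (A : Matrix (Fin p) (Fin p) ℝ) : Matrix (Fin p) (Fin p) ℝ :=
  if h : A.PosSemidef then
    h.1.eigenvectorUnitary.1 * diagonal ((↑) ∘ (√·) ∘ h.1.eigenvalues) *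
      (star h.1.eigenvectorUnitary : Matrix (Fin p) (Fin p) ℝ)
  else 0

/-- The centered Gaussian distribution `N_p(0, S0)` on `Fin p → ℝ`, realized as the pushforward
of the product of standard Gaussians under `x ↦ S0^{1/2} x`. -/
def gaussianVec {p : ℕ} (S0 : Matrix (Fin p) (Fin p) ℝ) : Measure (Fin p → ℝ) :=
  (Measure.pi fun _ : Fin p => gaussianReal 0 1).map fun x => (matSqrt S0).mulVec x

/-- Joint law of `n` i.i.d. `N_p(0, S0)` random vectors. -/
def gaussianSample (n p : ℕ) (S0 : Matrix (Fin p) (Fin p) ℝ) : Measure (Fin n → Fin p → ℝ) :=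
  Measure.pi fun _ : Fin n => gaussianVec S0

/-- The sample covariance matrix `n⁻¹ Σᵢ Xᵢ Xᵢᵀ`. -/
def sampleCov {n p : ℕ} (X : Fin n → Fin p → ℝ) : Matrix (Fin p) (Fin p) ℝ :=
  (n : ℝ)⁻¹ • ∑ i : Fin n, Matrix.vecMulVec (X i) (X i)

/-- The submatrix of `A` corresponding to the clique `C_j = {j, …, j+k}` (0-indexed). -/
def cliqueSub {p k : ℕ} (A : Matrix (Fin p) (Fin p) ℝ) (j : Fin (p - k)) :
    Matrix (Fin (k + 1)) (Fin (k + 1)) ℝ :=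
  fun a b => A ⟨j.1 + a.1, by have := j.2; have := a.2; omega⟩
               ⟨j.1 + b.1, by have := j.2; have := b.2; omega⟩

/-- The submatrix of `A` corresponding to the separator `S_j = {j+1, …, j+k}` (0-indexed). -/
def sepSub {p k : ℕ} (A : Matrix (Fin p) (Fin p) ℝ) (j : Fin (p - k - 1)) :
    Matrix (Fin k) (Fin k) ℝ :=
  fun a b => A ⟨j.1 + 1 + a.1, by have := j.2; have := a.2; omega⟩
               ⟨j.1 + 1 + b.1, by have := j.2; have := b.2; omega⟩

/-- Zero-padding of a matrix indexed by the clique `C_j` to a `p×p` matrix. -/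
def padClique {p k : ℕ} (j : Fin (p - k)) (B : Matrix (Fin (k + 1)) (Fin (k + 1)) ℝ) :
    Matrix (Fin p) (Fin p) ℝ :=
  fun a b =>
    if h : j.1 ≤ a.1 ∧ a.1 ≤ j.1 + k ∧ j.1 ≤ b.1 ∧ b.1 ≤ j.1 + k then
      B ⟨a.1 - j.1, by omega⟩ ⟨b.1 - j.1, by omega⟩
    else 0

/-- Zero-padding of a matrix indexed by the separator `S_j` to a `p×p` matrix. -/
def padSep {p k : ℕ} (j : Fin (p - k - 1)) (B : Matrix (Fin k) (Fin k) ℝ) :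
    Matrix (Fin p) (Fin p) ℝ :=
  fun a b =>
    if h : j.1 + 1 ≤ a.1 ∧ a.1 ≤ j.1 + k ∧ j.1 + 1 ≤ b.1 ∧ b.1 ≤ j.1 + k then
      B ⟨a.1 - (j.1 + 1), by omega⟩ ⟨b.1 - (j.1 + 1), by omega⟩
    else 0

/-- The graphical MLE `Ω̂^M = Σ_j (S_{C_j}^{-1})^0 − Σ_j (S_{S_j}^{-1})^0` for the `k`-banded
Gaussian graphical model. -/
def graphicalMLE (k : ℕ) {p : ℕ} (S : Matrix (Fin p) (Fin p) ℝ) :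
    Matrix (Fin p) (Fin p) ℝ :=
  (∑ j : Fin (p - k), padClique j (cliqueSub S j)⁻¹) -
  (∑ j : Fin (p - k - 1), padSep j (sepSub S j)⁻¹)

/-- `Σ_j ((n⁻¹ I_{k+1} + S_{C_j})⁻¹)^0`. -/
def cliqueTerm (n k : ℕ) {p : ℕ} (S : Matrix (Fin p) (Fin p) ℝ) :
    Matrix (Fin p) (Fin p) ℝ :=
  ∑ j : Fin (p - k), padClique j ((n : ℝ)⁻¹ • (1 : Matrix (Fin (k + 1)) (Fin (k + 1)) ℝ) +
    cliqueSub S j)⁻¹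

/-- `Σ_j ((n⁻¹ I_k + S_{S_j})⁻¹)^0`. -/
def sepTerm (n k : ℕ) {p : ℕ} (S : Matrix (Fin p) (Fin p) ℝ) :
    Matrix (Fin p) (Fin p) ℝ :=
  ∑ j : Fin (p - k - 1), padSep j ((n : ℝ)⁻¹ • (1 : Matrix (Fin k) (Fin k) ℝ) + sepSub S j)⁻¹

/-- The Bayes estimator under Stein's loss for the `G`-Wishart prior `W_G(δ, I_p)`. -/
def bayesL1 (δ n k : ℕ) {p : ℕ} (S : Matrix (Fin p) (Fin p) ℝ) :
    Matrix (Fin p) (Fin p) ℝ :=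
  (((δ : ℝ) + n - 2) / n) • (cliqueTerm n k S - sepTerm n k S)

/-- The Bayes estimator under squared-error loss (the posterior mean) for the `G`-Wishart prior
`W_G(δ, I_p)`. -/
def bayesL2 (δ n k : ℕ) {p : ℕ} (S : Matrix (Fin p) (Fin p) ℝ) :
    Matrix (Fin p) (Fin p) ℝ :=
  (((δ : ℝ) + k + n) / n) • (cliqueTerm n k S - sepTerm n k S) + (n : ℝ)⁻¹ • sepTerm n k S

open Finset

section PosSemidef

variable {n : Type*} [Fintype n] [DecidableEq n] {A : Matrix n n ℝ}

theorem Matrix.PosSemidef.abs_apply_le_half_add (hA : A.PosSemidef) (i j : n) :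
    |A i j| ≤ (A i i + A j j) / 2 := by
  have hsym : A j i = A i j := by simpa using congrFun (congrFun hA.isHermitian.eq i) j
  have hplus := hA.dotProduct_mulVec_nonneg (Pi.single i 1 + Pi.single j 1)
  have hminus := hA.dotProduct_mulVec_nonneg (Pi.single i 1 - Pi.single j 1)
  simp only [star_trivial, mulVec_add, mulVec_sub, mulVec_single, MulOpposite.op_one, one_smul,
    dotProduct_add, dotProduct_sub, add_dotProduct, sub_dotProduct, single_dotProduct, col_apply,
    one_mul, hsym] at hplus hminus
  rw [abs_le]
  constructor <;> linarith

theorem Matrix.IsHermitian.posSemidef_algebraMap_sub (hA : A.IsHermitian) {c : ℝ}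
    (hc : ∀ μ ∈ spectrum ℝ A, μ ≤ c) : (algebraMap ℝ (Matrix n n ℝ) c - A).PosSemidef := by
  refine posSemidef_iff_isHermitian_and_spectrum_nonneg.mpr ⟨?_, ?_⟩
  · exact (isHermitian_diagonal _).sub hA
  · rw [← spectrum.singleton_sub_eq]
    rintro _ ⟨_, rfl, μ, hμ, rfl⟩
    exact sub_nonneg.mpr (hc μ hμ)

theorem Matrix.PosSemidef.abs_apply_le_of_spectrum_le (hA : A.PosSemidef) {c : ℝ}
    (hc : ∀ μ ∈ spectrum ℝ A, μ ≤ c) (i j : n) : |A i j| ≤ c := by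
  have hdiag (k : n) : A k k ≤ c := by
    simpa [algebraMap_eq_diagonal] using
      (hA.isHermitian.posSemidef_algebraMap_sub hc).diag_nonneg (i := k)
  linarith [hA.abs_apply_le_half_add i j, hdiag i, hdiag j]

end PosSemidef

theorem card_filter_abs_sub_le {p : ℕ} (i : Fin p) (k : ℕ) :
    #{j : Fin p | |(j : ℤ) - i| ≤ k} ≤ 2 * k + 1 := by
  calc #{j : Fin p | |(j : ℤ) - i| ≤ k}
      ≤ #(Icc ((i : ℤ) - k) (i + k)) := by
        refine card_le_card_of_injOn (fun j => (j : ℤ)) (fun j hj => ?_) (fun a _ b _ h => ?_)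
        · simp only [coe_filter, Set.mem_ofPred_eq, abs_le] at hj
          simp only [coe_Icc, Set.mem_Icc]
          omega
        · exact Fin.ext (Int.natCast_inj.mp h)
    _ = 2 * k + 1 := by rw [Int.card_Icc]; omega

theorem sum_abs_le_tail_add_band {p : ℕ} (A : Matrix (Fin p) (Fin p) ℝ) {c : ℝ}
    (hA : ∀ i j, |A i j| ≤ c) (k : ℕ) (j : Fin p) :
    ∑ i, |A i j| ≤
      (∑ i : Fin p, if (k : ℤ) < |(i : ℤ) - j| then |A i j| else 0) + (2 * k + 1) * c := by
  have hc : 0 ≤ c := (abs_nonneg _).trans (hA j j)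
  rw [← sum_filter,
    ← sum_filter_add_sum_filter_not univ fun i : Fin p => (k : ℤ) < |(i : ℤ) - j|]
  gcongr
  calc _ ≤ #{i : Fin p | |(i : ℤ) - j| ≤ k} • c := by
        simp only [not_lt]
        exact sum_le_card_nsmul _ _ _ fun i _ => hA i j
    _ ≤ (2 * k + 1) * c := by
        rw [nsmul_eq_mul]
        gcongr
        exact_mod_cast card_filter_abs_sub_le j k

theorem statement1_general (ε0 : ℝ) (γ : ℕ → ℝ) {p : ℕ} (Ω : Matrix (Fin p) (Fin p) ℝ) (hΩ : memU ε0 γ Ω) :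
    ∀ k0 : ℕ, 1 ≤ k0 → k0 < p →
      linftyNorm Ω ≤ γ k0 + (2 * (k0 : ℝ) + 1) * ε0⁻¹ := by
  intro k0 hk0 hkp
  obtain ⟨hPD, htail, hspec⟩ := hΩ
  have : Nonempty (Fin p) := ⟨⟨0, by omega⟩⟩
  have hentry : ∀ i j, |Ω i j| ≤ ε0⁻¹ :=
    hPD.posSemidef.abs_apply_le_of_spectrum_le fun μ hμ => (hspec μ hμ).2
  refine ciSup_le fun i => ?_
  -- `memU` controls column tails, so symmetry turns the row sum into a column sum.
  calc ∑ j, |Ω i j| = ∑ j, |Ω j i| := by simp_rw [← hPD.isHermitian.apply i, star_trivial]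
    _ ≤ _ := sum_abs_le_tail_add_band Ω hentry k0 i
    _ ≤ _ := by gcongr; exact htail k0 hk0 i

/-- quantitative bound for the second inclusion of Lemma 1. -/
theorem statement1 (ε0 : ℝ) (hε0 : 0 < ε0) (hε1 : ε0 ≤ 1)
    (γ : ℕ → ℝ) (hγmono : Antitone γ) (hγnn : ∀ k, 0 ≤ γ k)
    (hγ0 : Tendsto γ atTop (nhds 0))
    {p : ℕ} (Ω : Matrix (Fin p) (Fin p) ℝ) (hΩ : memU ε0 γ Ω) :
    ∀ k0 : ℕ, 1 ≤ k0 → k0 < p →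
      linftyNorm Ω ≤ γ k0 + (2 * (k0 : ℝ) + 1) * ε0⁻¹ :=
  statement1_general ε0 γ Ω hΩ

end
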